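/- arXiv:2112.09501 — 4 statements merged into one kernel-verified Lean document; each statement's English description precedes it below -/
import Mathlib

section
/- Let $\ell$ be a positive integer and let $G$ be a connected finite simple graph with more than $\frac{1}{2}(3^{\ell}-1)$ vertices, in which every vertex has degree at most four. Let $v$ be a vertex of $G$ of degree at most three. Then $G$ contains a path (a sequence of distinct vertices with consecutive vertices adjacent) with $\ell+1$ vertices starting at $v$, such that $v$ is an endpoint of the path. -/
/-!
Grow breadth-first spheres around `v`. If some vertex lies at distance at least `ℓ` from `v`,
a prefix of a shortest path to it is the required path. Otherwise every vertex lies in one of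
the spheres of radius `0, …, ℓ - 1`. Every vertex of the sphere of radius `d + 1` has a
neighbour in the sphere of radius `d`, and every vertex of the sphere of radius `d` has at most
three neighbours in the next sphere (for `d = 0` since `deg v ≤ 3`, for `d > 0` since one of its
at most four neighbours lies one sphere closer to `v`). Hence the sphere of radius `d` has at
most `3 ^ d` vertices and `G` has at most `1 + 3 + ⋯ + 3 ^ (ℓ - 1) = (3 ^ ℓ - 1) / 2`
vertices.
-/

open Finset

namespace SimpleGraph

variable {V : Type*} {G : SimpleGraph V}

lemma Reachable.exists_path_length_eq_of_le_dist {v u : V} (hr : G.Reachable v u) {k : ℕ}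
    (hk : k ≤ G.dist v u) : ∃ (w : V) (p : G.Walk v w), p.IsPath ∧ p.length = k := by
  obtain ⟨p, hp, hlen⟩ := hr.exists_path_of_dist
  exact ⟨_, p.take k, hp.take k, by rw [Walk.take_length]; omega⟩

lemma exists_adj_dist_eq_of_dist_eq_add_one {v u : V} {d : ℕ} (h : G.dist v u = d + 1) :
    ∃ w, G.Adj w u ∧ G.dist v w = d := by
  have hr : G.Reachable v u := Reachable.of_dist_ne_zero (by omega)
  obtain ⟨p, -, hlen⟩ := hr.exists_path_of_dist
  have hadj : G.Adj (p.getVert d) u := by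
    have := p.adj_getVert_succ (i := d) (by omega)
    rwa [show d + 1 = p.length by omega, p.getVert_length] at this
  have hle : G.dist v (p.getVert d) ≤ d := by
    simpa [hlen, h] using dist_le (p.take d)
  refine ⟨_, hadj, ?_⟩
  have := hadj.diff_dist_adj (u := v)
  omega

variable [Fintype V]

-- Vertices not reachable from `v` have `dist` zero and so fall into the sphere of radius `0`.
variable (G) in
noncomputable def sphereFinset (v : V) (d : ℕ) : Finset V :=
  {u | G.dist v u = d}

@[simp]
lemma mem_sphereFinset {v u : V} {d : ℕ} : u ∈ G.sphereFinset v d ↔ G.dist v u = d := by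
  simp [sphereFinset]

lemma Connected.sphereFinset_zero (hconn : G.Connected) (v : V) : G.sphereFinset v 0 = {v} := by
  ext u
  rw [mem_sphereFinset, hconn.dist_eq_zero_iff, mem_singleton, eq_comm]

lemma card_eq_sum_card_sphereFinset {v : V} {ℓ : ℕ} (h : ∀ u, G.dist v u < ℓ) :
    Fintype.card V = ∑ d ∈ range ℓ, #(G.sphereFinset v d) := by
  rw [← card_univ, card_eq_sum_card_fiberwise (f := G.dist v) (t := range ℓ)
    (fun u _ ↦ mem_range.mpr (h u))]
  rfl

variable [DecidableRel G.Adj]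

lemma Connected.card_adj_sphereFinset_succ_le (hconn : G.Connected) {v w : V} {k d : ℕ}
    (hv : G.degree v ≤ k) (hdeg : ∀ u, G.degree u ≤ k + 1) (hw : w ∈ G.sphereFinset v d) :
    #{u ∈ G.sphereFinset v (d + 1) | G.Adj u w} ≤ k := by
  have hsub : {u ∈ G.sphereFinset v (d + 1) | G.Adj u w} ⊆ G.neighborFinset w := fun u hu ↦ by
    simpa [adj_comm] using (mem_filter.mp hu).2
  rw [mem_sphereFinset] at hw
  cases d with
  | zero =>
    obtain rfl : v = w := hconn.dist_eq_zero_iff.mp hw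
    exact (card_le_card hsub).trans (by rwa [card_neighborFinset_eq_degree])
  | succ n =>
    -- the neighbour of `w` one step closer to `v` is not counted
    obtain ⟨x, hxw, hx⟩ := exists_adj_dist_eq_of_dist_eq_add_one hw
    have hss : {u ∈ G.sphereFinset v (n + 1 + 1) | G.Adj u w} ⊂ G.neighborFinset w :=
      (ssubset_iff_of_subset hsub).2
        ⟨x, by simpa using hxw.symm, by simp [hx, show n ≠ n + 1 + 1 by omega]⟩
    have := card_lt_card hss
    have := hdeg w
    rw [card_neighborFinset_eq_degree] at *
    omega

lemma Connected.card_sphereFinset_succ_le (hconn : G.Connected) {v : V} {k : ℕ}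
    (hv : G.degree v ≤ k) (hdeg : ∀ u, G.degree u ≤ k + 1) (d : ℕ) :
    #(G.sphereFinset v (d + 1)) ≤ k * #(G.sphereFinset v d) := by
  have := card_mul_le_card_mul (s := G.sphereFinset v (d + 1)) (t := G.sphereFinset v d)
    (m := 1) G.Adj
    (fun u hu ↦ by
      obtain ⟨w, hwu, hw⟩ := exists_adj_dist_eq_of_dist_eq_add_one (mem_sphereFinset.mp hu)
      exact one_le_card.mpr ⟨w, by simp [bipartiteAbove, hw, hwu.symm]⟩)
    (fun w hw ↦ hconn.card_adj_sphereFinset_succ_le hv hdeg hw)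
  simpa [mul_comm] using this

lemma Connected.card_sphereFinset_le_pow (hconn : G.Connected) {v : V} {k : ℕ}
    (hv : G.degree v ≤ k) (hdeg : ∀ u, G.degree u ≤ k + 1) (d : ℕ) :
    #(G.sphereFinset v d) ≤ k ^ d := by
  induction d with
  | zero => simp [hconn.sphereFinset_zero]
  | succ d ih =>
    calc #(G.sphereFinset v (d + 1)) ≤ k * #(G.sphereFinset v d) :=
          hconn.card_sphereFinset_succ_le hv hdeg d
      _ ≤ k * k ^ d := Nat.mul_le_mul_left k ih
      _ = k ^ (d + 1) := (pow_succ' k d).symm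

lemma Connected.card_le_sum_pow_of_forall_dist_lt (hconn : G.Connected) {v : V} {k ℓ : ℕ}
    (hv : G.degree v ≤ k) (hdeg : ∀ u, G.degree u ≤ k + 1) (h : ∀ u, G.dist v u < ℓ) :
    Fintype.card V ≤ ∑ d ∈ range ℓ, k ^ d := by
  rw [card_eq_sum_card_sphereFinset h]
  exact sum_le_sum fun d _ ↦ hconn.card_sphereFinset_le_pow hv hdeg d

end SimpleGraph

theorem stmt_2_general (V : Type*) [Fintype V] (G : SimpleGraph V)
    [DecidableRel G.Adj] (ℓ : ℕ)
    (hconn : G.Connected)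
    (hcard : 3 ^ ℓ - 1 < 2 * Fintype.card V)
    (hdeg : ∀ u : V, G.degree u ≤ 4)
    (v : V) (hv : G.degree v ≤ 3) :
    ∃ (w : V) (p : G.Walk v w), p.IsPath ∧ p.length = ℓ := by
  by_cases hfar : ∃ u, ℓ ≤ G.dist v u
  · obtain ⟨u, hu⟩ := hfar
    exact (hconn v u).exists_path_length_eq_of_le_dist hu
  · simp only [not_exists, not_le] at hfar
    have hmoore := hconn.card_le_sum_pow_of_forall_dist_lt hv hdeg hfar
    have hgeom := geom_sum_mul_add 2 ℓ
    norm_num at hgeom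
    omega

/-- A connected finite simple graph with more than `(3^ℓ - 1)/2` vertices, all of
degree at most four, contains a path with `ℓ + 1` vertices starting at any given
vertex `v` of degree at most three. -/
theorem stmt_2 (V : Type*) [Fintype V] [DecidableEq V] (G : SimpleGraph V)
    [DecidableRel G.Adj] (ℓ : ℕ) (hℓ : 0 < ℓ)
    (hconn : G.Connected)
    (hcard : 3 ^ ℓ - 1 < 2 * Fintype.card V)
    (hdeg : ∀ u : V, G.degree u ≤ 4)
    (v : V) (hv : G.degree v ≤ 3) :
    ∃ (w : V) (p : G.Walk v w), p.IsPath ∧ p.length = ℓ :=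
  stmt_2_general V G ℓ hconn hcard hdeg v hv
end

section
/- Let $I \subset \mathbb{R}$ be a finite subset and $\delta$ a positive real number. Then there exist a positive integer $k$, real numbers $a_1, \ldots, a_k \in (0,1]$, and $\mathbb{Q}$-linear maps $f_1, \ldots, f_k \colon \operatorname{Span}_{\mathbb{Q}}(I \cup \{1\}) \to \mathbb{Q}$ such that: (i) each $f_i$ fixes every rational number in $\operatorname{Span}_{\mathbb{Q}}(I \cup \{1\})$; (ii) $\sum_{i=1}^{k} a_i f_i(a) = a$ for every $a \in \operatorname{Span}_{\mathbb{Q}}(I \cup \{1\})$; and (iii) $|f_i(a) - a| \le \delta$ for every $a \in I$ and every $i$. -/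
/-!
Choose a ℚ-linear functional `φ` with `φ 1 = 1`; every `x` splits as `φ x • 1 + P x`, so it
suffices to write the inclusion `ι` of the span as a convex combination of ℚ-valued functionals
that are uniformly close to `ι` on the finitely many points `P b`, `b ∈ I`. In a ℚ-basis `(e_j)`
this is a statement about the single real vector `(ι e_j)_j`: it is a convex combination, with
positive weights, of the `n + 1` vertices of a rational simplex of size `< ε` around it.
-/

open Module

theorem exists_convexCombination_rat_approx {n : ℕ} (x : Fin n → ℝ) {ε : ℝ} (hε : 0 < ε) :
    ∃ (a : Fin (n + 1) → ℝ) (r : Fin (n + 1) → Fin n → ℚ),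
      (∀ i, 0 < a i) ∧ ∑ i, a i = 1 ∧ (∀ j, ∑ i, a i * r i j = x j) ∧
      ∀ i j, |(r i j : ℝ) - x j| ≤ ε := by
  obtain ⟨q, hq, hqε⟩ := exists_rat_btwn hε
  have hη : (0 : ℝ) < q / (n + 1) := by positivity
  choose s hs_lo hs_hi using fun j => exists_rat_btwn (sub_lt_self (x j) hη)
  have hη_le : (q : ℝ) / (n + 1) ≤ q := div_le_self hq.le (by linarith [n.cast_nonneg (α := ℝ)])
  let t : Fin n → ℝ := fun j => (x j - s j) / q
  have ht_pos : ∀ j, 0 < t j := fun j => div_pos (sub_pos.2 (hs_hi j)) hq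
  have ht_lt : ∀ j, t j < 1 / (n + 1) := fun j => by
    rw [div_lt_iff₀ hq, one_div_mul_eq_div]; linarith [hs_lo j]
  have ht_sum : ∑ j, t j < 1 := calc
    ∑ j, t j ≤ ∑ _j : Fin n, 1 / ((n : ℝ) + 1) := Finset.sum_le_sum fun j _ => (ht_lt j).le
    _ = n / (n + 1) := by simp [div_eq_mul_inv]
    _ < 1 := by rw [div_lt_one (by positivity)]; linarith
  -- vertices `s` and `s + q eᵢ`; the weight of `s + q eᵢ` is `t i`
  refine ⟨Fin.cons (1 - ∑ j, t j) t, Fin.cons s fun i j => s j + if i = j then q else 0,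
    Fin.cases (by simpa using ht_sum) ht_pos, by simp [Fin.sum_cons], fun j => ?_, ?_⟩
  · have htq : t j * q = x j - s j := div_mul_cancel₀ _ hq.ne'
    simp only [Fin.sum_univ_succ, Fin.cons_zero, Fin.cons_succ]
    push_cast
    simp only [apply_ite (Rat.cast : ℚ → ℝ), Rat.cast_zero, mul_add, Finset.sum_add_distrib,
      ← Finset.sum_mul, mul_ite, mul_zero, Finset.sum_ite_eq', Finset.mem_univ, if_true, htq]
    ring
  · refine Fin.cases (fun j => ?_) (fun i j => ?_)
    · simp only [Fin.cons_zero, abs_le]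
      constructor <;> linarith [hs_lo j, hs_hi j]
    · simp only [Fin.cons_succ]
      split_ifs <;> push_cast <;> rw [abs_le] <;> constructor <;> linarith [hs_lo j, hs_hi j]

section
variable {κ W : Type*} [Fintype κ] [AddCommGroup W] [Module ℚ W]

theorem Module.Basis.apply_eq_sum_repr_mul (b : Basis κ ℚ W) (L : W →ₗ[ℚ] ℝ) (w : W) :
    L w = ∑ j, (b.repr w j : ℝ) * L (b j) := by
  conv_lhs => rw [← b.sum_repr w]
  simp only [map_sum, map_smul, Rat.smul_def]

theorem Module.Basis.cast_constr_apply (b : Basis κ ℚ W) (r : κ → ℚ) (w : W) :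
    ((b.constr ℚ r w : ℚ) : ℝ) = ∑ j, (b.repr w j : ℝ) * r j := by
  simp [Basis.constr_apply_fintype]

theorem Module.Basis.abs_cast_constr_apply_sub_le (b : Basis κ ℚ W) (L : W →ₗ[ℚ] ℝ) {r : κ → ℚ}
    {ε : ℝ} (hr : ∀ j, |(r j : ℝ) - L (b j)| ≤ ε) (w : W) :
    |((b.constr ℚ r w : ℚ) : ℝ) - L w| ≤ (∑ j, |(b.repr w j : ℝ)|) * ε := by
  rw [b.cast_constr_apply, b.apply_eq_sum_repr_mul L, ← Finset.sum_sub_distrib, Finset.sum_mul]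
  refine (Finset.abs_sum_le_sum_abs _ _).trans (Finset.sum_le_sum fun j _ => ?_)
  rw [← mul_sub, abs_mul]
  exact mul_le_mul_of_nonneg_left (hr j) (abs_nonneg _)

end

theorem exists_convexCombination_ratFunctionals_approx {W : Type*} [AddCommGroup W] [Module ℚ W]
    [FiniteDimensional ℚ W] (ι : W →ₗ[ℚ] ℝ) {J : Set W} (hJ : J.Finite) {δ : ℝ} (hδ : 0 < δ) :
    ∃ (n : ℕ) (a : Fin (n + 1) → ℝ) (g : Fin (n + 1) → W →ₗ[ℚ] ℚ),
      (∀ i, 0 < a i) ∧ ∑ i, a i = 1 ∧ (∀ w, ∑ i, a i * g i w = ι w) ∧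
      ∀ i, ∀ w ∈ J, |(g i w : ℝ) - ι w| ≤ δ := by
  let b := finBasis ℚ W
  obtain ⟨M, hM⟩ := (hJ.image fun w => ∑ j, |(b.repr w j : ℝ)|).bddAbove
  have hM' : ∀ w ∈ J, ∑ j, |(b.repr w j : ℝ)| ≤ max M 0 :=
    fun w hw => (hM ⟨w, hw, rfl⟩).trans (le_max_left _ _)
  have hMδ : max M 0 * (δ / (max M 0 + 1)) ≤ δ := by
    rw [mul_div_assoc', div_le_iff₀ (by positivity)]; nlinarith [le_max_right M 0]
  obtain ⟨a, r, ha_pos, ha_sum, hr_comb, hr_approx⟩ :=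
    exists_convexCombination_rat_approx (fun j => ι (b j)) (ε := δ / (max M 0 + 1))
      (by positivity)
  refine ⟨finrank ℚ W, a, fun i => b.constr ℚ (r i), ha_pos, ha_sum, fun w => ?_,
    fun i w hw => ?_⟩
  · simp only [b.cast_constr_apply, Finset.mul_sum]
    rw [Finset.sum_comm, b.apply_eq_sum_repr_mul ι]
    refine Finset.sum_congr rfl fun j _ => ?_
    rw [← hr_comb j, Finset.mul_sum]
    exact Finset.sum_congr rfl fun i _ => by ring
  · calc _ ≤ (∑ j, |(b.repr w j : ℝ)|) * (δ / (max M 0 + 1)) :=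
          b.abs_cast_constr_apply_sub_le ι (hr_approx i) w
      _ ≤ max M 0 * (δ / (max M 0 + 1)) := by gcongr; exact hM' w hw
      _ ≤ δ := hMδ

theorem exists_convexCombination_ratFunctionals_approx_of_apply_eq_one {W : Type*}
    [AddCommGroup W] [Module ℚ W] [FiniteDimensional ℚ W] (ι : W →ₗ[ℚ] ℝ) {w₀ : W}
    (hw₀ : ι w₀ = 1) {J : Set W} (hJ : J.Finite) {δ : ℝ} (hδ : 0 < δ) :
    ∃ (n : ℕ) (a : Fin (n + 1) → ℝ) (f : Fin (n + 1) → W →ₗ[ℚ] ℚ),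
      (∀ i, 0 < a i) ∧ ∑ i, a i = 1 ∧ (∀ i, f i w₀ = 1) ∧ (∀ w, ∑ i, a i * f i w = ι w) ∧
      ∀ i, ∀ w ∈ J, |(f i w : ℝ) - ι w| ≤ δ := by
  have hw₀_ne : w₀ ≠ 0 := by rintro rfl; simp at hw₀
  obtain ⟨φ, hφ⟩ := Module.exists_dual_forall_apply_eq_one (K := ℚ)
    (LinearIndepOn.singleton (R := ℚ) (v := id) hw₀_ne)
  have hφw₀ : φ w₀ = 1 := hφ w₀ rfl
  let P : W →ₗ[ℚ] W := LinearMap.id - φ.smulRight w₀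
  have hι_split : ∀ w, ι w = φ w + ι (P w) := fun w => by
    simp [P, Rat.smul_def, hw₀]
  obtain ⟨n, a, g, ha_pos, ha_sum, hg_comb, hg_approx⟩ :=
    exists_convexCombination_ratFunctionals_approx ι (hJ.image P) hδ
  refine ⟨n, a, fun i => φ + g i ∘ₗ P, ha_pos, ha_sum, fun i => ?_, fun w => ?_,
    fun i w hw => ?_⟩
  · simp [P, hφw₀]
  · simp [mul_add, Finset.sum_add_distrib, ← Finset.sum_mul, ha_sum, hg_comb, ← hι_split]
  · simpa [hι_split w] using hg_approx i (P w) ⟨w, hw, rfl⟩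

/-- Partition lemma: for a finite `I ⊆ ℝ` and `δ > 0` there are
`a₁, …, a_k ∈ (0,1]` and `ℚ`-linear maps `f₁, …, f_k : Span_ℚ(I ∪ {1}) → ℚ`
fixing `ℚ`, with `∑ aᵢ fᵢ = id` and `|fᵢ(a) - a| ≤ δ` for all `a ∈ I`. -/
theorem stmt_4 (I : Set ℝ) (hI : I.Finite) (δ : ℝ) (hδ : 0 < δ) :
    ∃ (k : ℕ) (a : Fin k → ℝ)
      (f : Fin k → ((Submodule.span ℚ (I ∪ {1} : Set ℝ)) →ₗ[ℚ] ℚ)),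
      0 < k ∧
      (∀ i, 0 < a i ∧ a i ≤ 1) ∧
      (∀ i (q : ℚ) (hq : (q : ℝ) ∈ Submodule.span ℚ (I ∪ {1} : Set ℝ)),
        f i ⟨(q : ℝ), hq⟩ = q) ∧
      (∀ x : Submodule.span ℚ (I ∪ {1} : Set ℝ),
        ∑ i, a i * ((f i x : ℚ) : ℝ) = (x : ℝ)) ∧
      (∀ i (b : ℝ) (hb : b ∈ I),
        |((f i ⟨b, Submodule.subset_span (Or.inl hb)⟩ : ℚ) : ℝ) - b| ≤ δ) := by
  let V := Submodule.span ℚ (I ∪ {1} : Set ℝ)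
  let one : V := ⟨1, Submodule.subset_span (Or.inr rfl)⟩
  have : FiniteDimensional ℚ V :=
    FiniteDimensional.span_of_finite ℚ (hI.union (Set.finite_singleton 1))
  obtain ⟨n, a, f, ha_pos, ha_sum, hf_one, hf_comb, hf_approx⟩ :=
    exists_convexCombination_ratFunctionals_approx_of_apply_eq_one V.subtype (w₀ := one) rfl
      (hI.preimage Subtype.val_injective.injOn) hδ
  refine ⟨n + 1, a, f, n.succ_pos, fun i => ⟨ha_pos i, ?_⟩, fun i q hq => ?_, hf_comb,
    fun i b hb => hf_approx i _ hb⟩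
  · exact ha_sum ▸ Finset.single_le_sum (fun j _ => (ha_pos j).le) (Finset.mem_univ i)
  · have hq_one : (⟨q, hq⟩ : V) = q • one := Subtype.ext (by simp [one, Rat.smul_def])
    rw [hq_one, map_smul, hf_one, smul_eq_mul, mul_one]
end

section
/- Let $I \subset [0, +\infty)$ be a set of real numbers satisfying the descending chain condition (DCC). Then the set $\Sigma(I) := \{ \sum_{i=1}^{\ell} f_i \mid \ell \in \mathbb{Z}_{\ge 0},\ f_1, \ldots, f_{\ell} \in I \}$ of all finite sums of elements of $I$ (including the empty sum $0$) also satisfies the DCC. -/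
/-!
Sums of nonnegative terms are monotone in the list of summands for the sublist-embedding order,
so Higman's lemma makes the finite sums of a partially well-ordered set of nonnegative elements
partially well-ordered again. In a linear order, partially well-ordered means well-founded, i.e. DCC.
-/

theorem Set.isWF_iff_not_exists_strictAnti {α : Type*} [Preorder α] {s : Set α} :
    s.IsWF ↔ ¬∃ g : ℕ → α, (∀ n, g n ∈ s) ∧ StrictAnti g := by
  rw [Set.isWF_iff_no_descending_seq]
  exact ⟨fun h ⟨g, hmem, hg⟩ => h g hg hmem, fun h g hg hmem => h ⟨g, hmem, hg⟩⟩

theorem Set.IsWF.addSubmonoid_closure {M : Type*} [AddCommMonoid M] [LinearOrder M]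
    [IsOrderedCancelAddMonoid M] {s : Set M} (hs : s ⊆ Set.Ici 0) (h : s.IsWF) :
    (AddSubmonoid.closure s : Set M).IsWF :=
  (h.isPWO.addSubmonoid_closure fun _ hx => hs hx).isWF

theorem setOf_eq_fin_sum_subset_addSubmonoid_closure {M : Type*} [AddCommMonoid M] (s : Set M) :
    {x : M | ∃ (ℓ : ℕ) (f : Fin ℓ → M), (∀ i, f i ∈ s) ∧ x = ∑ i, f i} ⊆
      AddSubmonoid.closure s := by
  rintro x ⟨ℓ, f, hf, rfl⟩
  exact sum_mem fun i _ => AddSubmonoid.subset_closure (hf i)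

/-- If `I ⊆ [0,∞)` satisfies the DCC (no strictly decreasing infinite sequence),
then the set of all finite sums of elements of `I` also satisfies the DCC. -/
theorem stmt_7 (I : Set ℝ) (hI : I ⊆ Set.Ici (0 : ℝ))
    (hdcc : ¬∃ g : ℕ → ℝ, (∀ n, g n ∈ I) ∧ StrictAnti g) :
    ¬∃ g : ℕ → ℝ,
      (∀ n, g n ∈ {x : ℝ | ∃ (ℓ : ℕ) (f : Fin ℓ → ℝ), (∀ i, f i ∈ I) ∧ x = ∑ i, f i}) ∧
      StrictAnti g := by
  rw [← Set.isWF_iff_not_exists_strictAnti] at hdcc ⊢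
  exact (hdcc.addSubmonoid_closure hI).subset (setOf_eq_fin_sum_subset_addSubmonoid_closure I)
end

section
/- Let $f \colon X \to Y$ be a function between topological spaces' underlying sets where $X$ is a Noetherian topological space, and let $m \colon X \to \mathbb{R} \cup \{-\infty\}$ be a function with the following property: for every irreducible closed subset $Z \subseteq X$ with generic behavior, there exist a nonempty open subset $U \subseteq X$ meeting $Z$ and a constant $c_Z$ such that $m(x) = c_Z$ for all $x \in Z \cap U$. Then $m$ takes only finitely many values and every fiber of $m$ is a constructible subset of $X$. -/
/-!
Noetherian induction on closed sets: a reducible closed set is the union of two proper closed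
subsets, and an irreducible closed set `Z` splits into the locally closed set `Z ∩ U`, on which `m`
is constant, and the proper closed subset `Z \ U`. Hence every closed set, in particular `X`, is
covered by finitely many locally closed sets on each of which `m` is constant; this gives both
finiteness of the range and constructibility of the fibres.
-/

open Set TopologicalSpace

namespace TopologicalSpace.NoetherianSpace

variable {X : Type*} [TopologicalSpace X] [NoetherianSpace X]

theorem induction_isClosed {P : Set X → Prop} (empty : P ∅)
    (union : ∀ s t, IsClosed s → IsClosed t → P s → P t → P (s ∪ t))
    (irreducible : ∀ Z, IsClosed Z → IsIrreducible Z → (∀ W, IsClosed W → W ⊂ Z → P W) → P Z)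
    {Z : Set X} (hZ : IsClosed Z) : P Z := by
  lift Z to Closeds X using hZ
  induction Z using WellFoundedLT.induction with
  | ind Z IH =>
  have IH' : ∀ W, IsClosed W → W ⊂ Z → P W := fun W hW hWZ =>
    IH ⟨W, hW⟩ (SetLike.coe_ssubset_coe.mp hWZ)
  rcases (Z : Set X).eq_empty_or_nonempty with hempty | hne
  · rwa [hempty]
  by_cases hpre : IsPreirreducible (Z : Set X)
  · exact irreducible Z Z.isClosed ⟨hne, hpre⟩ IH'
  simp only [isPreirreducible_iff_isClosed_union_isClosed, not_forall, not_or] at hpre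
  obtain ⟨z₁, z₂, hz₁, hz₂, hcover, hnot₁, hnot₂⟩ := hpre
  have hsplit : (Z : Set X) = ((Z : Set X) ∩ z₁) ∪ ((Z : Set X) ∩ z₂) := by
    rw [← inter_union_distrib_left, inter_eq_left.mpr hcover]
  rw [hsplit]
  exact union _ _ (Z.isClosed.inter hz₁) (Z.isClosed.inter hz₂)
    (IH' _ (Z.isClosed.inter hz₁) (inter_ssubset_left_iff.mpr hnot₁))
    (IH' _ (Z.isClosed.inter hz₂) (inter_ssubset_left_iff.mpr hnot₂))

end TopologicalSpace.NoetherianSpace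

section ConstOnFiniteLocallyClosedCover

variable {X β : Type*} [TopologicalSpace X]

def ConstOnFiniteLocallyClosedCover (m : X → β) (Z : Set X) : Prop :=
  ∃ S : Set (Set X), S.Finite ∧ (∀ t ∈ S, IsLocallyClosed t ∧ (m '' t).Subsingleton) ∧ Z = ⋃₀ S

namespace ConstOnFiniteLocallyClosedCover

variable {m : X → β} {Z Z' : Set X}

theorem empty : ConstOnFiniteLocallyClosedCover m ∅ :=
  ⟨∅, finite_empty, by simp, by simp⟩

theorem union (h : ConstOnFiniteLocallyClosedCover m Z)
    (h' : ConstOnFiniteLocallyClosedCover m Z') : ConstOnFiniteLocallyClosedCover m (Z ∪ Z') := by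
  obtain ⟨S, hSfin, hS, rfl⟩ := h
  obtain ⟨S', hSfin', hS', rfl⟩ := h'
  exact ⟨S ∪ S', hSfin.union hSfin', fun t ht => ht.elim (hS t) (hS' t), (sUnion_union S S').symm⟩

theorem of_isLocallyClosed (hZ : IsLocallyClosed Z) {c : β} (hc : ∀ x ∈ Z, m x = c) :
    ConstOnFiniteLocallyClosedCover m Z := by
  refine ⟨{Z}, finite_singleton Z, ?_, (sUnion_singleton Z).symm⟩
  rintro _ rfl
  exact ⟨hZ, subsingleton_singleton.anti (image_subset_iff.mpr hc)⟩

theorem finite_image (h : ConstOnFiniteLocallyClosedCover m Z) : (m '' Z).Finite := by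
  obtain ⟨S, hSfin, hS, rfl⟩ := h
  rw [sUnion_eq_biUnion, image_iUnion₂]
  exact hSfin.biUnion fun t ht => (hS t ht).2.finite

theorem exists_inter_preimage_singleton_eq_iUnion (h : ConstOnFiniteLocallyClosedCover m Z)
    (c : β) : ∃ (n : ℕ) (s : Fin n → Set X),
      (∀ i, IsLocallyClosed (s i)) ∧ Z ∩ m ⁻¹' {c} = ⋃ i, s i := by
  obtain ⟨S, hSfin, hS, rfl⟩ := h
  obtain ⟨n, s, hs⟩ := (hSfin.subset (sep_subset S fun t => t ⊆ m ⁻¹' {c})).fin_embedding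
  refine ⟨n, s, fun i => (hS _ (hs.le (mem_range_self i)).1).1, ?_⟩
  rw [← sUnion_range, hs]
  ext x
  simp only [mem_inter_iff, mem_sUnion, mem_preimage, mem_singleton_iff, mem_sep_iff]
  constructor
  · rintro ⟨⟨t, ht, hxt⟩, rfl⟩
    exact ⟨t, ⟨ht, fun y hy => (hS t ht).2 (mem_image_of_mem m hy) (mem_image_of_mem m hxt)⟩, hxt⟩
  · rintro ⟨t, ⟨ht, htc⟩, hxt⟩
    exact ⟨⟨t, ht, hxt⟩, htc hxt⟩

end ConstOnFiniteLocallyClosedCover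

open ConstOnFiniteLocallyClosedCover in
theorem IsClosed.constOnFiniteLocallyClosedCover_of_generically_const [NoetherianSpace X]
    {m : X → β}
    (h : ∀ Z : Set X, IsClosed Z → IsIrreducible Z →
      ∃ (U : Set X) (c : β), IsOpen U ∧ (Z ∩ U).Nonempty ∧ ∀ x ∈ Z ∩ U, m x = c)
    {Z : Set X} (hZ : IsClosed Z) : ConstOnFiniteLocallyClosedCover m Z := by
  refine NoetherianSpace.induction_isClosed empty (fun _ _ _ _ hs ht => hs.union ht) ?_ hZ
  intro Z hZ hirr IH
  obtain ⟨U, c, hU, ⟨x, hxZ, hxU⟩, hconst⟩ := h Z hZ hirr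
  have hrest : ConstOnFiniteLocallyClosedCover m (Z \ U) :=
    IH _ (hZ.sdiff hU) (sdiff_ssubset_left_iff.mpr ⟨x, hxZ, hxU⟩)
  rw [← inter_union_sdiff Z U]
  exact (of_isLocallyClosed (hZ.isLocallyClosed.inter hU.isLocallyClosed) hconst).union hrest

end ConstOnFiniteLocallyClosedCover

theorem stmt_17_general (X : Type*) [TopologicalSpace X]
    [TopologicalSpace.NoetherianSpace X] (m : X → WithBot ℝ)
    (h : ∀ Z : Set X, IsClosed Z → IsIrreducible Z →
      ∃ (U : Set X) (c : WithBot ℝ), IsOpen U ∧ (Z ∩ U).Nonempty ∧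
        ∀ x ∈ Z ∩ U, m x = c) :
    (Set.range m).Finite ∧
    ∀ c : WithBot ℝ, ∃ (n : ℕ) (s : Fin n → Set X),
      (∀ i, IsLocallyClosed (s i)) ∧ m ⁻¹' {c} = ⋃ i, s i := by
  have hcover := isClosed_univ.constOnFiniteLocallyClosedCover_of_generically_const h
  refine ⟨image_univ (f := m) ▸ hcover.finite_image, fun c => ?_⟩
  simpa only [univ_inter] using hcover.exists_inter_preimage_singleton_eq_iUnion c

/-- Noetherian induction for the mld function: if a function
`m : X → ℝ ∪ {-∞}` on a Noetherian topological space is generically constant on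
every irreducible closed subset, then `m` takes finitely many values and every
fiber of `m` is constructible (a finite union of locally closed subsets). -/
theorem stmt_17 (X Y : Type*) [TopologicalSpace X]
    [TopologicalSpace.NoetherianSpace X] (f : X → Y) (m : X → WithBot ℝ)
    (h : ∀ Z : Set X, IsClosed Z → IsIrreducible Z →
      ∃ (U : Set X) (c : WithBot ℝ), IsOpen U ∧ (Z ∩ U).Nonempty ∧
        ∀ x ∈ Z ∩ U, m x = c) :
    (Set.range m).Finite ∧
    ∀ c : WithBot ℝ, ∃ (n : ℕ) (s : Fin n → Set X),
      (∀ i, IsLocallyClosed (s i)) ∧ m ⁻¹' {c} = ⋃ i, s i :=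
  stmt_17_general X m h
end
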